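/- Let p be even and ζ₀ the standard matching of {1,...,p}. The involution J on the set of perfect matchings that transposes the least index 2j-1, 2j such that {2j,2j-1} is not a block (and fixes ζ₀) reverses the crossing parity of every matching other than ζ₀. -/
import Mathlib


open Finset
open scoped Classical

def crossing {n : ℕ} (e f : Fin n × Fin n) : Prop :=
  (e.1 < f.1 ∧ f.1 < e.2 ∧ e.2 < f.2) ∨ (f.1 < e.1 ∧ e.1 < f.2 ∧ f.2 < e.2)

noncomputable def crossNum {n : ℕ} (ζ : Finset (Fin n × Fin n)) : ℕ :=
  ((ζ ×ˢ ζ).filter fun q => q.1.1 < q.2.1 ∧ crossing q.1 q.2).card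

noncomputable def msign {n : ℕ} (ζ : Finset (Fin n × Fin n)) : ℤ :=
  (-1) ^ (crossNum ζ)

/-- A perfect matching of `Fin n`. -/
def IsPM {n : ℕ} (ζ : Finset (Fin n × Fin n)) : Prop :=
  (∀ e ∈ ζ, e.1 < e.2) ∧
  (∀ x : Fin n, ∃ e ∈ ζ, x = e.1 ∨ x = e.2) ∧
  (∀ e ∈ ζ, ∀ f ∈ ζ, e ≠ f → e.1 ≠ f.1 ∧ e.1 ≠ f.2 ∧ e.2 ≠ f.1 ∧ e.2 ≠ f.2)

noncomputable def PMs (n : ℕ) : Finset (Finset (Fin n × Fin n)) :=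
  univ.filter IsPM

def ordPair {n : ℕ} (a b : Fin n) : Fin n × Fin n := (min a b, max a b)

/-- The matching obtained from `ζ` by relabeling points by a permutation `σ`. -/
noncomputable def permApply {n : ℕ} (σ : Equiv.Perm (Fin n))
    (ζ : Finset (Fin n × Fin n)) : Finset (Fin n × Fin n) :=
  ζ.image fun e => ordPair (σ e.1) (σ e.2)

/- ----------------- auxiliary lemmas ----------------- -/

lemma swap_lt_iff {n : ℕ} (a b p q : Fin n) (hab : (a:ℕ) + 1 = (b:ℕ))
    (h1 : ¬(p = a ∧ q = b)) (h2 : ¬(p = b ∧ q = a)) :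
    Equiv.swap a b p < Equiv.swap a b q ↔ p < q := by
  simp only [Equiv.swap_apply_def]
  split_ifs <;>
    (simp only [Fin.lt_def, Fin.ext_iff, not_and] at * <;> omega)

lemma cross_flip {n : ℕ} (a b : Fin n) (hab : (a:ℕ) + 1 = (b:ℕ))
    (e f : Fin n × Fin n) (he : e.1 < e.2) (hf : f.1 < f.2)
    (ha : e.1 = a ∨ e.2 = a) (hb : f.1 = b ∨ f.2 = b)
    (h1 : e.1 ≠ f.1) (h2 : e.1 ≠ f.2) (h3 : e.2 ≠ f.1) (h4 : e.2 ≠ f.2)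
    (hna1 : f.1 ≠ a) (hna2 : f.2 ≠ a) (hnb1 : e.1 ≠ b) (hnb2 : e.2 ≠ b) :
    crossing (Equiv.swap a b e.1, Equiv.swap a b e.2)
      (Equiv.swap a b f.1, Equiv.swap a b f.2) ↔ ¬ crossing e f := by
  simp only [crossing, Equiv.swap_apply_def]
  split_ifs <;>
    (simp only [Fin.lt_def, Fin.ext_iff, not_and, not_or] at * <;> omega)

lemma cross_stable {n : ℕ} (a b : Fin n) (hab : (a:ℕ) + 1 = (b:ℕ))
    (e f : Fin n × Fin n)
    (cond : (e.1 ≠ a ∧ e.2 ≠ a ∧ f.1 ≠ a ∧ f.2 ≠ a) ∨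
            (e.1 ≠ b ∧ e.2 ≠ b ∧ f.1 ≠ b ∧ f.2 ≠ b)) :
    (Equiv.swap a b e.1 < Equiv.swap a b f.1 ∧
      crossing (Equiv.swap a b e.1, Equiv.swap a b e.2)
        (Equiv.swap a b f.1, Equiv.swap a b f.2)) ↔
    (e.1 < f.1 ∧ crossing e f) := by
  have key : ∀ p q : Fin n,
      (p = e.1 ∨ p = e.2 ∨ p = f.1 ∨ p = f.2) →
      (q = e.1 ∨ q = e.2 ∨ q = f.1 ∨ q = f.2) →
      (Equiv.swap a b p < Equiv.swap a b q ↔ p < q) := by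
    intro p q hp hq
    apply swap_lt_iff a b p q hab <;>
      (rcases cond with h | h <;> rcases hp with rfl|rfl|rfl|rfl <;>
        rcases hq with rfl|rfl|rfl|rfl <;> rintro ⟨rfl, rfl⟩ <;> simp_all)
  simp only [crossing]
  rw [key e.1 f.1 (by tauto) (by tauto), key f.1 e.2 (by tauto) (by tauto),
      key e.2 f.2 (by tauto) (by tauto), key f.1 e.1 (by tauto) (by tauto),
      key e.1 f.2 (by tauto) (by tauto), key f.2 e.2 (by tauto) (by tauto)]

lemma cross_symm {n : ℕ} (e f : Fin n × Fin n) : crossing e f ↔ crossing f e := by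
  unfold crossing; tauto

lemma card_filter_pair {α : Type*} [DecidableEq α] (x y : α) (hxy : x ≠ y)
    (p : α → Prop) [DecidablePred p] :
    (({x, y} : Finset α).filter p).card
      = (if p x then 1 else 0) + (if p y then 1 else 0) := by
  rw [filter_insert, filter_singleton]
  split_ifs <;> simp_all [Finset.card_insert_of_notMem]

set_option maxHeartbeats 1000000 in
/-- The involution `J`: if `j` is the largest index such that the consecutive block
`{2j, 2j+1}` (0-indexed) is not a block of the perfect matching `ζ` (so in particular
`ζ` is not the standard matching `ζ₀`), then applying the transposition of `2j` and
`2j+1` to `ζ` reverses its crossing parity. -/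
theorem involution_reverses_parity (m : ℕ) (ζ : Finset (Fin (2 * m) × Fin (2 * m)))
    (hζ : ζ ∈ PMs (2 * m)) (j : Fin m)
    (hj : (⟨2 * j.val, by have := j.isLt; omega⟩,
           ⟨2 * j.val + 1, by have := j.isLt; omega⟩) ∉ ζ)
    (hmax : ∀ j' : Fin m, j < j' →
      ((⟨2 * j'.val, by have := j'.isLt; omega⟩ : Fin (2 * m)),
       (⟨2 * j'.val + 1, by have := j'.isLt; omega⟩ : Fin (2 * m))) ∈ ζ) :
    msign (permApply (Equiv.swap
        (⟨2 * j.val, by have := j.isLt; omega⟩ : Fin (2 * m))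
        (⟨2 * j.val + 1, by have := j.isLt; omega⟩ : Fin (2 * m))) ζ) = -msign ζ := by
  set a : Fin (2 * m) := ⟨2 * j.val, by have := j.isLt; omega⟩ with ha_def
  set b : Fin (2 * m) := ⟨2 * j.val + 1, by have := j.isLt; omega⟩ with hb_def
  have hab : (a : ℕ) + 1 = (b : ℕ) := rfl
  have haltb : a < b := by rw [Fin.lt_def]; exact Nat.lt_succ_self _
  have hanb : a ≠ b := ne_of_lt haltb
  set τ := Equiv.swap a b with hτ_def
  have hPM : IsPM ζ := by
    have h := hζ
    rw [PMs, mem_filter] at h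
    exact h.2
  obtain ⟨hord, hcov, hdisj⟩ := hPM
  -- the edges containing a and b
  obtain ⟨ea, hea, haea⟩ := hcov a
  obtain ⟨eb, heb, hbeb⟩ := hcov b
  have hane : ea.1 = a ∨ ea.2 = a := haea.imp Eq.symm Eq.symm
  have hbne : eb.1 = b ∨ eb.2 = b := hbeb.imp Eq.symm Eq.symm
  have huniq : ∀ e ∈ ζ, ∀ f ∈ ζ, ∀ x : Fin (2 * m),
      (x = e.1 ∨ x = e.2) → (x = f.1 ∨ x = f.2) → e = f := by
    intro e he f hf x hx1 hx2
    by_contra hne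
    have h := hdisj e he f hf hne
    rcases hx1 with rfl|rfl <;> rcases hx2 with h2|h2
    · exact absurd h2 h.1
    · exact absurd h2 h.2.1
    · exact absurd h2 h.2.2.1
    · exact absurd h2 h.2.2.2
  have noab : ∀ e ∈ ζ, ¬((e.1 = a ∨ e.2 = a) ∧ (e.1 = b ∨ e.2 = b)) := by
    rintro e he ⟨h1, h2⟩
    have hlt := hord e he
    rcases h1 with h|h <;> rcases h2 with h'|h'
    · exact hanb (h.symm.trans h')
    · have hE : e = (a, b) := Prod.ext_iff.mpr ⟨h, h'⟩
      exact hj (hE ▸ he)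
    · rw [h, h'] at hlt; exact absurd hlt (not_lt.mpr haltb.le)
    · exact hanb (h.symm.trans h')
  have heanb : ea ≠ eb := by
    rintro rfl
    exact noab ea hea ⟨hane, hbne⟩
  have hdistinct := hdisj ea hea eb heb heanb
  have eaNoB : ea.1 ≠ b ∧ ea.2 ≠ b :=
    ⟨fun h => noab ea hea ⟨hane, Or.inl h⟩, fun h => noab ea hea ⟨hane, Or.inr h⟩⟩
  have ebNoA : eb.1 ≠ a ∧ eb.2 ≠ a :=
    ⟨fun h => noab eb heb ⟨Or.inl h, hbne⟩, fun h => noab eb heb ⟨Or.inr h, hbne⟩⟩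
  have noA : ∀ e ∈ ζ, e ≠ ea → e.1 ≠ a ∧ e.2 ≠ a := by
    intro e he hne
    constructor
    · intro h; exact hne (huniq e he ea hea a (Or.inl h.symm) haea)
    · intro h; exact hne (huniq e he ea hea a (Or.inr h.symm) haea)
  have noB : ∀ e ∈ ζ, e ≠ eb → e.1 ≠ b ∧ e.2 ≠ b := by
    intro e he hne
    constructor
    · intro h; exact hne (huniq e he eb heb b (Or.inl h.symm) hbeb)
    · intro h; exact hne (huniq e he eb heb b (Or.inr h.symm) hbeb)
  -- relabeling map
  set g : Fin (2 * m) × Fin (2 * m) → Fin (2 * m) × Fin (2 * m) :=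
    fun e => (τ e.1, τ e.2) with hg_def
  have hswap_lt : ∀ e ∈ ζ, τ e.1 < τ e.2 := by
    intro e he
    rw [hτ_def, swap_lt_iff a b e.1 e.2 hab]
    · exact hord e he
    · rintro ⟨h1, h2⟩
      exact hj (by
        rw [show ((a, b) : Fin (2 * m) × Fin (2 * m)) = e from
          (Prod.ext_iff.mpr ⟨h1, h2⟩).symm]
        exact he)
    · rintro ⟨h1, h2⟩
      have hlt := hord e he
      rw [h1, h2] at hlt
      exact absurd hlt (not_lt.mpr haltb.le)
  have himg : permApply τ ζ = ζ.image g := by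
    apply Finset.image_congr
    intro e he
    rw [Finset.mem_coe] at he
    have hlt := hswap_lt e he
    simp [ordPair, hg_def, min_eq_left hlt.le, max_eq_right hlt.le]
  have τinj : Function.Injective τ := (Equiv.swap a b).injective
  have ginj : Function.Injective g := by
    intro u v huv
    have h1 := congrArg Prod.fst huv
    have h2 := congrArg Prod.snd huv
    simp only [hg_def] at h1 h2
    exact Prod.ext_iff.mpr ⟨τinj h1, τinj h2⟩
  have Ginj : Function.Injective
      (fun q : (Fin (2 * m) × Fin (2 * m)) × (Fin (2 * m) × Fin (2 * m)) =>
        (g q.1, g q.2)) := by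
    intro u v huv
    have h1 := congrArg Prod.fst huv
    have h2 := congrArg Prod.snd huv
    simp only at h1 h2
    exact Prod.ext_iff.mpr ⟨ginj h1, ginj h2⟩
  -- rewrite crossNum of the image
  have hprod : (ζ.image g) ×ˢ (ζ.image g)
      = (ζ ×ˢ ζ).image (fun q => (g q.1, g q.2)) := by
    ext q
    simp only [Finset.mem_product, Finset.mem_image]
    constructor
    · rintro ⟨⟨u, hu, hux⟩, ⟨v, hv, hvy⟩⟩
      exact ⟨(u, v), ⟨hu, hv⟩, by rw [Prod.ext_iff]; exact ⟨hux, hvy⟩⟩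
    · rintro ⟨r, hr, rfl⟩
      exact ⟨⟨r.1, hr.1, rfl⟩, ⟨r.2, hr.2, rfl⟩⟩
  have hcross' : crossNum (ζ.image g)
      = ((ζ ×ˢ ζ).filter fun q =>
          (g q.1).1 < (g q.2).1 ∧ crossing (g q.1) (g q.2)).card := by
    rw [crossNum, hprod, Finset.filter_image, Finset.card_image_of_injective _ Ginj]
  -- the two exceptional ordered pairs
  set D : Finset ((Fin (2 * m) × Fin (2 * m)) × (Fin (2 * m) × Fin (2 * m))) :=
    {(ea, eb), (eb, ea)} with hD_def
  set s : Finset ((Fin (2 * m) × Fin (2 * m)) × (Fin (2 * m) × Fin (2 * m))) :=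
    ζ ×ˢ ζ with hs_def
  set S := s.filter (fun q => q.1.1 < q.2.1 ∧ crossing q.1 q.2) with hS_def
  set S' := s.filter (fun q => (g q.1).1 < (g q.2).1 ∧ crossing (g q.1) (g q.2))
    with hS'_def
  have hDs : D ⊆ s := by
    intro q hq
    rw [hD_def] at hq
    rw [hs_def, Finset.mem_product]
    rcases Finset.mem_insert.mp hq with rfl | hq
    · exact ⟨hea, heb⟩
    · rw [Finset.mem_singleton] at hq; subst hq; exact ⟨heb, hea⟩
  -- outside D, the predicate is stable
  have key2 : ∀ q ∈ s, q ∉ D →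
      (((g q.1).1 < (g q.2).1 ∧ crossing (g q.1) (g q.2)) ↔
        (q.1.1 < q.2.1 ∧ crossing q.1 q.2)) := by
    intro q hqs hqD
    have hq1 : q.1 ∈ ζ := (Finset.mem_product.mp hqs).1
    have hq2 : q.2 ∈ ζ := (Finset.mem_product.mp hqs).2
    have hnD1 : ¬(q.1 = ea ∧ q.2 = eb) := by
      rintro ⟨h1, h2⟩
      exact hqD (by rw [hD_def]; simp [Prod.ext_iff, h1, h2])
    have hnD2 : ¬(q.1 = eb ∧ q.2 = ea) := by
      rintro ⟨h1, h2⟩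
      exact hqD (by rw [hD_def]; simp [Prod.ext_iff, h1, h2])
    have cond : (q.1.1 ≠ a ∧ q.1.2 ≠ a ∧ q.2.1 ≠ a ∧ q.2.2 ≠ a) ∨
        (q.1.1 ≠ b ∧ q.1.2 ≠ b ∧ q.2.1 ≠ b ∧ q.2.2 ≠ b) := by
      by_cases h1 : q.1 = ea
      · right
        have h2 : q.2 ≠ eb := fun h => hnD1 ⟨h1, h⟩
        have hB := noB q.2 hq2 h2
        rw [h1]
        exact ⟨eaNoB.1, eaNoB.2, hB.1, hB.2⟩
      · by_cases h2 : q.2 = ea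
        · right
          have h1' : q.1 ≠ eb := fun h => hnD2 ⟨h, h2⟩
          have hB := noB q.1 hq1 h1'
          rw [h2]
          exact ⟨hB.1, hB.2, eaNoB.1, eaNoB.2⟩
        · left
          have u1 := noA q.1 hq1 h1
          have u2 := noA q.2 hq2 h2
          exact ⟨u1.1, u1.2, u2.1, u2.2⟩
    exact cross_stable a b hab q.1 q.2 cond
  have hsd : S' \ D = S \ D := by
    ext q
    simp only [hS'_def, hS_def, Finset.mem_sdiff, Finset.mem_filter]
    constructor
    · rintro ⟨⟨hqs, hp⟩, hqD⟩
      exact ⟨⟨hqs, (key2 q hqs hqD).mp hp⟩, hqD⟩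
    · rintro ⟨⟨hqs, hp⟩, hqD⟩
      exact ⟨⟨hqs, (key2 q hqs hqD).mpr hp⟩, hqD⟩
  -- counting on D
  have hDne : ((ea, eb) : (Fin (2 * m) × Fin (2 * m)) × (Fin (2 * m) × Fin (2 * m)))
      ≠ (eb, ea) := fun h => heanb (congrArg Prod.fst h)
  have hfcne : ea.1 ≠ eb.1 := hdistinct.1
  have hflip : crossing (g ea) (g eb) ↔ ¬ crossing ea eb :=
    cross_flip a b hab ea eb (hord ea hea) (hord eb heb) hane hbne
      hdistinct.1 hdistinct.2.1 hdistinct.2.2.1 hdistinct.2.2.2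
      ebNoA.1 ebNoA.2 eaNoB.1 eaNoB.2
  have hfc'ne : (g ea).1 ≠ (g eb).1 := fun h => hfcne (τinj h)
  have hinterS : S ∩ D = D.filter (fun q => q.1.1 < q.2.1 ∧ crossing q.1 q.2) := by
    ext q
    simp only [Finset.mem_inter, hS_def, Finset.mem_filter]
    constructor
    · rintro ⟨⟨_, hp⟩, hD⟩; exact ⟨hD, hp⟩
    · rintro ⟨hD, hp⟩; exact ⟨⟨hDs hD, hp⟩, hD⟩
  have hinterS' : S' ∩ D
      = D.filter (fun q => (g q.1).1 < (g q.2).1 ∧ crossing (g q.1) (g q.2)) := by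
    ext q
    simp only [Finset.mem_inter, hS'_def, Finset.mem_filter]
    constructor
    · rintro ⟨⟨_, hp⟩, hD⟩; exact ⟨hD, hp⟩
    · rintro ⟨hD, hp⟩; exact ⟨⟨hDs hD, hp⟩, hD⟩
  have cardS : (S ∩ D).card = if crossing ea eb then 1 else 0 := by
    rw [hinterS, hD_def, card_filter_pair _ _ hDne]
    by_cases hc : crossing ea eb
    · rcases lt_or_gt_of_ne hfcne with h | h
      · rw [if_pos hc, if_pos ⟨h, hc⟩, if_neg (by
          rintro ⟨h', _⟩; exact absurd h (not_lt.mpr h'.le))]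
      · rw [if_pos hc, if_neg (by rintro ⟨h', _⟩; exact absurd h' (not_lt.mpr h.le)),
          if_pos ⟨h, (cross_symm ea eb).mp hc⟩]
    · rw [if_neg hc, if_neg (by rintro ⟨_, h'⟩; exact hc h'),
        if_neg (by rintro ⟨_, h'⟩; exact hc ((cross_symm eb ea).mp h'))]
  have cardS' : (S' ∩ D).card = if crossing ea eb then 0 else 1 := by
    rw [hinterS', hD_def, card_filter_pair _ _ hDne]
    by_cases hc : crossing ea eb
    · rw [if_pos hc, if_neg (by rintro ⟨_, h'⟩; exact (hflip.mp h') hc),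
        if_neg (by rintro ⟨_, h'⟩; exact (hflip.mp ((cross_symm _ _).mp h')) hc)]
    · have hc' : crossing (g ea) (g eb) := hflip.mpr hc
      rcases lt_or_gt_of_ne hfc'ne with h | h
      · rw [if_neg hc, if_pos ⟨h, hc'⟩, if_neg (by
          rintro ⟨h', _⟩; exact absurd h (not_lt.mpr h'.le))]
      · rw [if_neg hc, if_neg (by rintro ⟨h', _⟩; exact absurd h' (not_lt.mpr h.le)),
          if_pos ⟨h, (cross_symm _ _).mp hc'⟩]
  -- put it together
  have hS'card : crossNum (permApply τ ζ) = (S' \ D).card + (S' ∩ D).card := by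
    rw [himg, hcross', ← Finset.card_sdiff_add_card_inter]
  have hScard : crossNum ζ = (S \ D).card + (S ∩ D).card := by
    rw [crossNum, ← Finset.card_sdiff_add_card_inter]
  have hsum : crossNum (permApply τ ζ) + crossNum ζ = 2 * (S \ D).card + 1 := by
    rw [hS'card, hScard, hsd, cardS, cardS']
    by_cases hc : crossing ea eb <;> simp [hc] <;> ring
  -- parity conclusion
  have h1 : msign (permApply τ ζ) * msign ζ = -1 := by
    rw [msign, msign, ← pow_add, hsum]
    exact Odd.neg_one_pow ⟨(S \ D).card, by ring⟩
  have h2 : msign ζ * msign ζ = 1 := by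
    rw [msign, ← pow_add]
    exact Even.neg_one_pow ⟨crossNum ζ, rfl⟩
  calc msign (permApply τ ζ) = (msign (permApply τ ζ) * msign ζ) * msign ζ := by
        rw [mul_assoc, h2, mul_one]
    _ = -msign ζ := by rw [h1]; ring
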